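/- Each of the lines L₀ (through D₀ and D₁) and L₄ (through D₄ and D₅) meets the parabola 𝒫 in exactly one point; that is, L₀ and L₄ are tangent to the parabola with focus O and directrix y = −2s. -/

import Mathlib

/-!
With θ = π/18 the four vertices are D₀ = (-cos θ, sin θ), D₁ = (-cos 3θ, -sin 3θ),
D₄ = (cos 3θ, -sin 3θ), D₅ = (cos θ, sin θ), and s = sin θ cos 2θ.
Substituting the line A + t(B - A) into x² = 4ry + 4r² gives a quadratic in t whose discriminant
is 16r (r‖B - A‖² - (B - A)ₓ (A × B)). For both chords ‖B - A‖² = 16 sin² θ cos² θ,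
(B - A)ₓ = 4 cos θ sin² θ and A × B = sin 4θ = 4 sin θ cos θ cos 2θ, so the discriminant vanishes
for r = sin θ cos 2θ, for every θ.
-/

open Real

noncomputable section

abbrev Pt := EuclideanSpace ℝ (Fin 2)

def pt (x y : ℝ) : Pt := (WithLp.equiv 2 _).symm ![x, y]

def lineThrough (A B : Pt) : Set Pt := {P | ∃ t : ℝ, P = A + t • (B - A)}

def D (i : ℤ) : Pt :=
  pt (Real.cos (2 * π * i / 9 + 17 * π / 18)) (Real.sin (2 * π * i / 9 + 17 * π / 18))

def s : ℝ := Real.sin (π / 18) * Real.cos (π / 9)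

def parab : Set Pt := {p : Pt | (p 0) ^ 2 = 4 * s * (p 1) + 4 * s ^ 2}

def parabola (r : ℝ) : Set Pt := {p | p 0 ^ 2 = 4 * r * p 1 + 4 * r ^ 2}

lemma parab_eq_parabola : parab = parabola s := rfl

@[simp] lemma pt_apply_zero (x y : ℝ) : pt x y 0 = x := rfl

@[simp] lemma pt_apply_one (x y : ℝ) : pt x y 1 = y := rfl

lemma existsUnique_mem_lineThrough_inter {A B : Pt} {S : Set Pt} (t₀ : ℝ)
    (h : ∀ t : ℝ, A + t • (B - A) ∈ S ↔ t = t₀) :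
    ∃! X : Pt, X ∈ lineThrough A B ∩ S := by
  refine ⟨A + t₀ • (B - A), ⟨⟨t₀, rfl⟩, (h t₀).2 rfl⟩, ?_⟩
  rintro _ ⟨⟨t, rfl⟩, hX⟩
  rw [(h t).1 hX]

lemma add_smul_sub_mem_parabola_iff (A B : Pt) (r t : ℝ) :
    A + t • (B - A) ∈ parabola r ↔
      (B 0 - A 0) ^ 2 * (t * t) + (2 * A 0 * (B 0 - A 0) - 4 * r * (B 1 - A 1)) * t
        + (A 0 ^ 2 - 4 * r * A 1 - 4 * r ^ 2) = 0 := by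
  simp only [parabola, Set.mem_ofPred_eq, PiLp.add_apply, PiLp.smul_apply, PiLp.sub_apply,
    smul_eq_mul]
  constructor <;> intro h <;> linear_combination h

theorem existsUnique_mem_lineThrough_inter_parabola {A B : Pt} {r : ℝ} (hAB : B 0 - A 0 ≠ 0)
    (h : r * ((B 0 - A 0) ^ 2 + (B 1 - A 1) ^ 2) = (B 0 - A 0) * (A 0 * B 1 - A 1 * B 0)) :
    ∃! X : Pt, X ∈ lineThrough A B ∩ parabola r := by
  have hdiscrim : discrim ((B 0 - A 0) ^ 2) (2 * A 0 * (B 0 - A 0) - 4 * r * (B 1 - A 1))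
      (A 0 ^ 2 - 4 * r * A 1 - 4 * r ^ 2) = 0 := by
    rw [discrim]
    linear_combination 16 * r * h
  exact existsUnique_mem_lineThrough_inter _ fun t => (add_smul_sub_mem_parabola_iff A B r t).trans
    (quadratic_eq_zero_iff_of_discrim_eq_zero (pow_ne_zero 2 hAB) hdiscrim t)

lemma cos_sub_cos_three_mul (θ : ℝ) : cos θ - cos (3 * θ) = 4 * cos θ * sin θ ^ 2 := by
  rw [cos_three_mul]
  linear_combination (-4 * cos θ) * sin_sq_add_cos_sq θ

lemma sin_add_sin_three_mul (θ : ℝ) : sin θ + sin (3 * θ) = 4 * sin θ * cos θ ^ 2 := by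
  rw [sin_three_mul]
  linear_combination (-4 * sin θ) * sin_sq_add_cos_sq θ

lemma sin_mul_cos_three_mul_add (θ : ℝ) :
    sin θ * cos (3 * θ) + cos θ * sin (3 * θ) = 4 * sin θ * cos θ * cos (2 * θ) := by
  rw [← sin_add, show θ + 3 * θ = 2 * (2 * θ) by ring, sin_two_mul, sin_two_mul]
  ring

section Chords

variable {θ : ℝ}

lemma existsUnique_mem_lineThrough_inter_parabola_left (hsin : sin θ ≠ 0) (hcos : cos θ ≠ 0) :
    ∃! X : Pt, X ∈ lineThrough (pt (-cos θ) (sin θ)) (pt (-cos (3 * θ)) (-sin (3 * θ))) ∩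
      parabola (sin θ * cos (2 * θ)) := by
  have hx : -cos (3 * θ) - -cos θ = 4 * cos θ * sin θ ^ 2 := by
    linear_combination cos_sub_cos_three_mul θ
  have hy : -sin (3 * θ) - sin θ = -(4 * sin θ * cos θ ^ 2) := by
    linear_combination -sin_add_sin_three_mul θ
  have hcross : -cos θ * -sin (3 * θ) - sin θ * -cos (3 * θ) =
      4 * sin θ * cos θ * cos (2 * θ) := by
    linear_combination sin_mul_cos_three_mul_add θ
  apply existsUnique_mem_lineThrough_inter_parabola <;>
    simp only [pt_apply_zero, pt_apply_one, hx, hy, hcross]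
  · simp [hsin, hcos]
  · linear_combination (16 * sin θ ^ 3 * cos θ ^ 2 * cos (2 * θ)) * sin_sq_add_cos_sq θ

lemma existsUnique_mem_lineThrough_inter_parabola_right (hsin : sin θ ≠ 0) (hcos : cos θ ≠ 0) :
    ∃! X : Pt, X ∈ lineThrough (pt (cos (3 * θ)) (-sin (3 * θ))) (pt (cos θ) (sin θ)) ∩
      parabola (sin θ * cos (2 * θ)) := by
  have hy : sin θ - -sin (3 * θ) = 4 * sin θ * cos θ ^ 2 := by
    linear_combination sin_add_sin_three_mul θ
  have hcross : cos (3 * θ) * sin θ - -sin (3 * θ) * cos θ =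
      4 * sin θ * cos θ * cos (2 * θ) := by
    linear_combination sin_mul_cos_three_mul_add θ
  apply existsUnique_mem_lineThrough_inter_parabola <;>
    simp only [pt_apply_zero, pt_apply_one, cos_sub_cos_three_mul, hy, hcross]
  · simp [hsin, hcos]
  · linear_combination (16 * sin θ ^ 3 * cos θ ^ 2 * cos (2 * θ)) * sin_sq_add_cos_sq θ

end Chords

lemma D_zero : D 0 = pt (-cos (π / 18)) (sin (π / 18)) := by
  rw [D, show 2 * π * ((0 : ℤ) : ℝ) / 9 + 17 * π / 18 = π - π / 18 by push_cast; ring,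
    cos_pi_sub, sin_pi_sub]

lemma D_one : D 1 = pt (-cos (3 * (π / 18))) (-sin (3 * (π / 18))) := by
  rw [D, show 2 * π * ((1 : ℤ) : ℝ) / 9 + 17 * π / 18 = 3 * (π / 18) + π by push_cast; ring,
    cos_add_pi, sin_add_pi]

lemma D_four : D 4 = pt (cos (3 * (π / 18))) (-sin (3 * (π / 18))) := by
  rw [D, show 2 * π * ((4 : ℤ) : ℝ) / 9 + 17 * π / 18 = 2 * π - 3 * (π / 18) by push_cast; ring,
    cos_two_pi_sub, sin_two_pi_sub]

lemma D_five : D 5 = pt (cos (π / 18)) (sin (π / 18)) := by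
  rw [D, show 2 * π * ((5 : ℤ) : ℝ) / 9 + 17 * π / 18 = π / 18 + 2 * π by push_cast; ring,
    cos_add_two_pi, sin_add_two_pi]

lemma s_eq : s = sin (π / 18) * cos (2 * (π / 18)) := by
  rw [s, show π / 9 = 2 * (π / 18) by ring]

theorem L0_L4_tangent_to_parabola :
    (∃! X : Pt, X ∈ lineThrough (D 0) (D 1) ∩ parab) ∧
    (∃! X : Pt, X ∈ lineThrough (D 4) (D 5) ∩ parab) := by
  have hsin : sin (π / 18) ≠ 0 :=
    (sin_pos_of_pos_of_lt_pi (by positivity) (by linarith [pi_pos])).ne'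
  have hcos : cos (π / 18) ≠ 0 :=
    (cos_pos_of_mem_Ioo ⟨by linarith [pi_pos], by linarith [pi_pos]⟩).ne'
  rw [parab_eq_parabola, s_eq, D_zero, D_one, D_four, D_five]
  exact ⟨existsUnique_mem_lineThrough_inter_parabola_left hsin hcos,
    existsUnique_mem_lineThrough_inter_parabola_right hsin hcos⟩
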